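/- Let α > 2, δ := 2/α, D > 0, λ > 0, μ > 0, p ∈ (0,1], and set κ_q := Γ(1+q)·Γ(1−q). For s > 0 and t ≥ 0 define 𝓛_t(s) := exp(−λ·p·s^(δ/2)·∫_{t²·s^(−δ)}^∞ 1/((1 + u^(1/δ))·√(u − t²·s^(−δ))) du). Then lim_{θ→0⁺} [ 2μ·∫₀^∞ (1 − 𝓛_t(θ·D^α)) dt ] / [ π·λ·p·μ·D²·κ_δ·θ^δ ] = 1. -/

import Mathlib

open Real MeasureTheory Filter
open scoped ENNReal Topology

/-- `κ_q := Γ(1+q)·Γ(1−q)`. -/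
noncomputable def kappa (q : ℝ) : ℝ := Real.Gamma (1 + q) * Real.Gamma (1 - q)

/-- `𝓛_t(s)` from Corollary 1 of the paper. -/
noncomputable def Lfun (lam p δ t s : ℝ) : ℝ :=
  Real.exp (-(lam * p * s ^ (δ / 2) *
    ∫ u in Set.Ioi (t ^ 2 * s ^ (-δ)),
      1 / ((1 + u ^ (1 / δ)) * Real.sqrt (u - t ^ 2 * s ^ (-δ)))))

namespace Stmt10

open Set

/-- The inner integral as a function of the scaled variable. -/
noncomputable def Ib (δ v : ℝ) : ℝ :=
  ∫ u in Set.Ioi (v ^ 2), 1 / ((1 + u ^ (1 / δ)) * Real.sqrt (u - v ^ 2))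

/-- The ENNReal version. -/
noncomputable def Il (δ v : ℝ) : ℝ≥0∞ :=
  ∫⁻ u in Set.Ioi (v ^ 2), ENNReal.ofReal (1 / ((1 + u ^ (1 / δ)) * Real.sqrt (u - v ^ 2)))

noncomputable def G (δ v : ℝ) : ℝ := (Il δ v).toReal

noncomputable def q (δ v u : ℝ) : ℝ≥0∞ :=
  Set.indicator (Set.Ioi (v ^ 2))
    (fun u => ENNReal.ofReal (1 / ((1 + u ^ (1 / δ)) * Real.sqrt (u - v ^ 2)))) u

lemma meas_q (δ : ℝ) : Measurable (Function.uncurry (q δ)) := by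
  have h : Function.uncurry (q δ) = Set.indicator {z : ℝ × ℝ | z.1 ^ 2 < z.2}
      (fun z => ENNReal.ofReal (1 / ((1 + z.2 ^ (1 / δ)) * Real.sqrt (z.2 - z.1 ^ 2)))) := by
    funext z
    rcases z with ⟨v, u⟩
    by_cases h : v ^ 2 < u <;>
      simp [q, Function.uncurry, Set.indicator, h, Set.mem_Ioi]
  rw [h]
  apply Measurable.indicator
  · apply Measurable.ennreal_ofReal
    apply Measurable.div measurable_const
    apply Measurable.mul
    · exact measurable_const.add (measurable_snd.pow measurable_const)
    · exact (measurable_snd.sub ((measurable_fst.pow_const 2))).sqrt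
  · exact measurableSet_lt (measurable_fst.pow_const 2) measurable_snd

lemma Il_eq (δ v : ℝ) : Il δ v = ∫⁻ u, q δ v u :=
  (lintegral_indicator measurableSet_Ioi _).symm

lemma meas_Il (δ : ℝ) : Measurable (fun v => Il δ v) := by
  have : (fun v => Il δ v) = fun v => ∫⁻ u, q δ v u := funext fun v => Il_eq δ v
  rw [this]
  exact (meas_q δ).lintegral_prod_right'

lemma Ib_nonneg (δ v : ℝ) : 0 ≤ Ib δ v := by
  apply setIntegral_nonneg measurableSet_Ioi
  intro u hu
  have hu0 : 0 < u := lt_of_le_of_lt (sq_nonneg v) hu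
  positivity

/-- The arcsine integrand is interval integrable on `[0,1]`. -/
lemma II_arcsin : IntervalIntegrable (fun x : ℝ => 1 / Real.sqrt (1 - x ^ 2)) volume 0 1 := by
  have h0 : IntervalIntegrable (fun x : ℝ => x ^ (-(1/2) : ℝ)) volume 0 1 :=
    intervalIntegral.intervalIntegrable_rpow' (by norm_num)
  have h1 : IntervalIntegrable (fun x : ℝ => (1 - x) ^ (-(1/2) : ℝ)) volume 0 1 := by
    simpa using (h0.comp_sub_left 1).symm
  refine h1.mono_fun ?_ ?_
  · apply Measurable.aestronglyMeasurable
    exact (measurable_const.div ((measurable_const.sub (measurable_id.pow_const 2)).sqrt))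
  · filter_upwards [ae_restrict_mem measurableSet_uIoc] with x hx
    rw [Set.uIoc_of_le (by norm_num : (0:ℝ) ≤ 1)] at hx
    obtain ⟨hx0, hx1⟩ := hx
    have hle : (0:ℝ) ≤ 1 - x := by linarith
    have h2 : Real.sqrt (1 - x) ≤ Real.sqrt (1 - x ^ 2) := by
      apply Real.sqrt_le_sqrt; nlinarith
    have hR : (1 - x) ^ (-(1/2) : ℝ) = 1 / Real.sqrt (1 - x) := by
      rw [Real.rpow_neg hle, Real.sqrt_eq_rpow]
      exact (one_div _).symm
    rw [Real.norm_eq_abs, Real.norm_eq_abs, hR,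
      abs_of_nonneg (by positivity), abs_of_nonneg (by positivity)]
    rcases eq_or_lt_of_le hx1 with h | h
    · subst h; norm_num
    · have hpos : 0 < Real.sqrt (1 - x) := Real.sqrt_pos.mpr (by linarith)
      exact one_div_le_one_div_of_le hpos h2

lemma int_arcsin : ∫ x in (0:ℝ)..1, 1 / Real.sqrt (1 - x ^ 2) = π / 2 := by
  have h := intervalIntegral.integral_eq_sub_of_hasDerivAt_of_tendsto
    (f := Real.arcsin) (f' := fun x => 1 / Real.sqrt (1 - x ^ 2))
    (by norm_num : (0:ℝ) < 1)
    (fun x hx => Real.hasDerivAt_arcsin (by linarith [hx.1] : x ≠ -1) (ne_of_lt hx.2))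
    II_arcsin
    (((Real.continuous_arcsin.tendsto 0).mono_left nhdsWithin_le_nhds))
    (((Real.continuous_arcsin.tendsto 1).mono_left nhdsWithin_le_nhds))
  simpa [Real.arcsin_zero, Real.arcsin_one] using h

lemma key_eq {u : ℝ} (hu : 0 < u) (v : ℝ) :
    (Real.sqrt u)⁻¹ * (1 / Real.sqrt (1 - ((Real.sqrt u)⁻¹ * v) ^ 2)) =
      1 / Real.sqrt (u - v ^ 2) := by
  have hb : 0 < Real.sqrt u := Real.sqrt_pos.mpr hu
  have hbsq : Real.sqrt u ^ 2 = u := Real.sq_sqrt hu.le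
  have h1 : 1 - ((Real.sqrt u)⁻¹ * v) ^ 2 = (u - v ^ 2) * (Real.sqrt u ^ 2)⁻¹ := by
    field_simp
    rw [hbsq]
  rw [h1, Real.sqrt_mul' _ (by positivity), Real.sqrt_inv, Real.sqrt_sq hb.le]
  rw [one_div, one_div, mul_inv, inv_inv]
  rw [← mul_assoc, mul_comm ((Real.sqrt u)⁻¹), mul_assoc, inv_mul_cancel₀ hb.ne', mul_one]

lemma II_sqrtker {u : ℝ} (hu : 0 < u) :
    IntervalIntegrable (fun v : ℝ => 1 / Real.sqrt (u - v ^ 2)) volume 0 (Real.sqrt u) := by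
  have hb : 0 < Real.sqrt u := Real.sqrt_pos.mpr hu
  have h1 := (II_arcsin.comp_mul_left (c := (Real.sqrt u)⁻¹))
  have h2 := h1.const_mul (Real.sqrt u)⁻¹
  have h3 : IntervalIntegrable
      (fun v : ℝ => (Real.sqrt u)⁻¹ * (1 / Real.sqrt (1 - ((Real.sqrt u)⁻¹ * v) ^ 2)))
      volume (0 / (Real.sqrt u)⁻¹) (1 / (Real.sqrt u)⁻¹) := h2
  rw [zero_div, one_div, inv_inv] at h3
  have h4 : (fun v : ℝ => (Real.sqrt u)⁻¹ * (1 / Real.sqrt (1 - ((Real.sqrt u)⁻¹ * v) ^ 2)))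
      = fun v : ℝ => 1 / Real.sqrt (u - v ^ 2) := funext fun v => key_eq hu v
  rwa [h4] at h3

lemma integrableOn_sqrtker {u : ℝ} (hu : 0 < u) :
    IntegrableOn (fun v : ℝ => 1 / Real.sqrt (u - v ^ 2)) (Ioo 0 (Real.sqrt u)) := by
  have hb : 0 < Real.sqrt u := Real.sqrt_pos.mpr hu
  have := (intervalIntegrable_iff_integrableOn_Ioo_of_le hb.le).mp (II_sqrtker hu)
  exact this

lemma integral_sqrtker {u : ℝ} (hu : 0 < u) :
    ∫ v in Ioo 0 (Real.sqrt u), 1 / Real.sqrt (u - v ^ 2) = π / 2 := by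
  have hb : 0 < Real.sqrt u := Real.sqrt_pos.mpr hu
  rw [← integral_Ioc_eq_integral_Ioo, ← intervalIntegral.integral_of_le hb.le]
  have h4 : (fun v : ℝ => 1 / Real.sqrt (u - v ^ 2))
      = fun v : ℝ => (Real.sqrt u)⁻¹ * (1 / Real.sqrt (1 - ((Real.sqrt u)⁻¹ * v) ^ 2)) :=
    funext fun v => (key_eq hu v).symm
  rw [h4]
  rw [intervalIntegral.integral_const_mul]
  rw [intervalIntegral.integral_comp_mul_left (fun x => 1 / Real.sqrt (1 - x ^ 2))
    (inv_ne_zero hb.ne')]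
  rw [mul_zero, inv_mul_cancel₀ hb.ne', inv_inv, int_arcsin, smul_eq_mul]
  field_simp

/-- Integrability of the Gamma-type integrand with rate `r`. -/
lemma rpow_exp_integrable {a r : ℝ} (ha : 0 < a) (hr : 0 < r) :
    IntegrableOn (fun t : ℝ => t ^ (a - 1) * Real.exp (-(r * t))) (Ioi 0) := by
  have h0 := Real.GammaIntegral_convergent ha
  have h1 : IntegrableOn (fun t : ℝ => Real.exp (-(r * t)) * (r * t) ^ (a - 1)) (Ioi 0) := by
    have h' : IntegrableOn (fun x : ℝ => Real.exp (-x) * x ^ (a - 1)) (Ioi (r * 0)) := by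
      simpa using h0
    simpa using (integrableOn_Ioi_comp_mul_left_iff
      (fun x : ℝ => Real.exp (-x) * x ^ (a - 1)) 0 hr).mpr h'
  have h2 : IntegrableOn
      (fun t : ℝ => r ^ (1 - a) * (Real.exp (-(r * t)) * (r * t) ^ (a - 1))) (Ioi 0) :=
    h1.const_mul (r ^ (1 - a))
  apply h2.congr_fun _ measurableSet_Ioi
  intro t ht
  have ht0 : (0:ℝ) < t := ht
  show r ^ (1-a) * (Real.exp (-(r*t)) * (r*t) ^ (a-1)) = t ^ (a-1) * Real.exp (-(r*t))
  rw [Real.mul_rpow hr.le ht0.le]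
  rw [show r ^ (1-a) * (Real.exp (-(r*t)) * (r ^ (a-1) * t ^ (a-1)))
      = (r ^ (1-a) * r ^ (a-1)) * (t ^ (a-1) * Real.exp (-(r*t))) by ring,
    ← Real.rpow_add hr, show (1-a) + (a-1) = 0 by ring, Real.rpow_zero, one_mul]

lemma integral_exp_neg_mul {r : ℝ} (hr : 0 < r) :
    ∫ y in Ioi (0:ℝ), Real.exp (-(r * y)) = r⁻¹ := by
  have h := integral_comp_mul_left_Ioi (fun y : ℝ => Real.exp (-y)) 0 hr
  simp only [mul_zero] at h
  rw [h, integral_exp_neg_Ioi, neg_zero, Real.exp_zero, smul_eq_mul, mul_one]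

lemma exp_neg_mul_integrable {r : ℝ} (hr : 0 < r) :
    IntegrableOn (fun y : ℝ => Real.exp (-(r * y))) (Ioi 0) := by
  have := exp_neg_integrableOn_Ioi 0 hr
  apply this.congr_fun _ measurableSet_Ioi
  intro y _; simp [neg_mul]

/-- The Mellin-type integral `∫₀^∞ x^(δ-1)/(1+x) dx = Γ(δ)Γ(1-δ)`. -/
lemma mellin_exists {δ : ℝ} (hδ0 : 0 < δ) (hδ1 : δ < 1) :
    IntegrableOn (fun x : ℝ => x ^ (δ - 1) / (1 + x)) (Ioi 0) ∧
      ∫ x in Ioi 0, x ^ (δ - 1) / (1 + x) = Real.Gamma δ * Real.Gamma (1 - δ) := by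
  have hmeas : Measurable fun z : ℝ × ℝ =>
      ENNReal.ofReal (z.1 ^ (δ - 1) * (Real.exp (-z.2) * Real.exp (-(z.1 * z.2)))) := by
    apply Measurable.ennreal_ofReal
    apply Measurable.mul
    · exact measurable_fst.pow measurable_const
    · exact (measurable_snd.neg.exp).mul ((measurable_fst.mul measurable_snd).neg.exp)
  have hmeasf : Measurable fun x : ℝ => x ^ (δ - 1) / (1 + x) :=
    (measurable_id.pow measurable_const).div (measurable_const.add measurable_id)
  have key : ∫⁻ x in Ioi (0:ℝ), ENNReal.ofReal (x ^ (δ - 1) / (1 + x))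
      = ENNReal.ofReal (Real.Gamma δ * Real.Gamma (1 - δ)) := by
    have step1 : ∀ x ∈ Ioi (0:ℝ), ENNReal.ofReal (x ^ (δ - 1) / (1 + x))
        = ∫⁻ y in Ioi (0:ℝ),
            ENNReal.ofReal (x ^ (δ - 1) * (Real.exp (-y) * Real.exp (-(x * y)))) := by
      intro x hx
      have hx0 : (0:ℝ) < x := hx
      have h1x : (0:ℝ) < 1 + x := by linarith
      have hfuneq : ∀ y : ℝ, x ^ (δ - 1) * (Real.exp (-y) * Real.exp (-(x * y)))
          = x ^ (δ - 1) * Real.exp (-((1 + x) * y)) := by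
        intro y
        rw [← Real.exp_add]
        ring_nf
      have hint : IntegrableOn (fun y : ℝ => x ^ (δ - 1) * Real.exp (-((1 + x) * y)))
          (Ioi 0) := (exp_neg_mul_integrable h1x).const_mul _
      have hval : ∫ y in Ioi (0:ℝ), x ^ (δ - 1) * Real.exp (-((1 + x) * y))
          = x ^ (δ - 1) / (1 + x) := by
        rw [integral_const_mul, integral_exp_neg_mul h1x, div_eq_mul_inv]
      simp only [hfuneq]
      rw [← hval, ofReal_integral_eq_lintegral_ofReal hint]
      filter_upwards [ae_restrict_mem measurableSet_Ioi] with y hy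
      positivity
    rw [setLIntegral_congr_fun measurableSet_Ioi step1]
    have hswap := lintegral_lintegral_swap (μ := volume.restrict (Ioi (0:ℝ)))
      (ν := volume.restrict (Ioi (0:ℝ)))
      (f := fun x y => ENNReal.ofReal (x ^ (δ - 1) * (Real.exp (-y) * Real.exp (-(x * y)))))
      hmeas.aemeasurable
    rw [hswap]
    have step2 : ∀ y ∈ Ioi (0:ℝ),
        (∫⁻ x in Ioi (0:ℝ),
            ENNReal.ofReal (x ^ (δ - 1) * (Real.exp (-y) * Real.exp (-(x * y)))))
        = ENNReal.ofReal (Real.Gamma δ * (Real.exp (-y) * y ^ ((1 - δ) - 1))) := by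
      intro y hy
      have hy0 : (0:ℝ) < y := hy
      have hfuneq : ∀ x : ℝ, x ^ (δ - 1) * (Real.exp (-y) * Real.exp (-(x * y)))
          = Real.exp (-y) * (x ^ (δ - 1) * Real.exp (-(y * x))) := by
        intro x; rw [mul_comm x y]; ring
      have hint : IntegrableOn (fun x : ℝ => Real.exp (-y) * (x ^ (δ - 1) * Real.exp (-(y * x))))
          (Ioi 0) := (rpow_exp_integrable hδ0 hy0).const_mul _
      have hval : ∫ x in Ioi (0:ℝ), Real.exp (-y) * (x ^ (δ - 1) * Real.exp (-(y * x)))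
          = Real.Gamma δ * (Real.exp (-y) * y ^ ((1 - δ) - 1)) := by
        rw [integral_const_mul, Real.integral_rpow_mul_exp_neg_mul_Ioi hδ0 hy0]
        rw [one_div, ← Real.rpow_neg_one y, ← Real.rpow_mul hy0.le]
        rw [show (-1) * δ = (1 - δ) - 1 by ring]
        ring
      simp only [hfuneq]
      rw [← hval, ofReal_integral_eq_lintegral_ofReal hint]
      filter_upwards [ae_restrict_mem measurableSet_Ioi] with x hx
      have hx0 : (0:ℝ) < x := hx
      positivity
    rw [setLIntegral_congr_fun measurableSet_Ioi step2]
    have hint2 : IntegrableOn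
        (fun y : ℝ => Real.Gamma δ * (Real.exp (-y) * y ^ ((1 - δ) - 1))) (Ioi 0) :=
      (Real.GammaIntegral_convergent (by linarith : (0:ℝ) < 1 - δ)).const_mul _
    rw [← ofReal_integral_eq_lintegral_ofReal hint2]
    · congr 1
      rw [integral_const_mul, ← Real.Gamma_eq_integral (by linarith : (0:ℝ) < 1 - δ)]
    · filter_upwards [ae_restrict_mem measurableSet_Ioi] with y hy
      have hy0 : (0:ℝ) < y := hy
      have := Real.Gamma_pos_of_pos hδ0
      positivity
  have hnn : 0 ≤ᵐ[volume.restrict (Ioi (0:ℝ))] fun x : ℝ => x ^ (δ - 1) / (1 + x) := by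
    filter_upwards [ae_restrict_mem measurableSet_Ioi] with x hx
    have hx0 : (0:ℝ) < x := hx
    positivity
  have hInt : IntegrableOn (fun x : ℝ => x ^ (δ - 1) / (1 + x)) (Ioi 0) := by
    refine ⟨hmeasf.aestronglyMeasurable, ?_⟩
    rw [hasFiniteIntegral_iff_ofReal hnn, key]
    exact ENNReal.ofReal_lt_top
  refine ⟨hInt, ?_⟩
  rw [integral_eq_lintegral_of_nonneg_ae hnn hmeasf.aestronglyMeasurable, key,
    ENNReal.toReal_ofReal]
  have h1 := Real.Gamma_pos_of_pos hδ0
  have h2 := Real.Gamma_pos_of_pos (by linarith : (0:ℝ) < 1 - δ)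
  positivity

/-- `∫₀^∞ 1/(1+u^(1/δ)) du = κ_δ`. -/
lemma oneAdd_int {δ : ℝ} (hδ0 : 0 < δ) (hδ1 : δ < 1) :
    IntegrableOn (fun u : ℝ => 1 / (1 + u ^ (1/δ))) (Ioi 0) ∧
      ∫ u in Ioi 0, 1 / (1 + u ^ (1/δ)) = kappa δ := by
  obtain ⟨hint, hval⟩ := mellin_exists hδ0 hδ1
  have hpowinv : ∀ x ∈ Ioi (0:ℝ), (x ^ δ) ^ (1/δ) = x := by
    intro x hx
    have hx0 : (0:ℝ) < x := hx
    rw [← Real.rpow_mul hx0.le, mul_one_div, div_self hδ0.ne', Real.rpow_one]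
  constructor
  · have hiff := integrableOn_Ioi_comp_rpow_iff'
      (f := fun u : ℝ => 1 / (1 + u ^ (1/δ))) (p := δ) hδ0.ne'
    apply hiff.mp
    apply hint.congr_fun _ measurableSet_Ioi
    intro x hx
    show x ^ (δ - 1) / (1 + x) = x ^ (δ - 1) • (1 / (1 + (x ^ δ) ^ (1/δ)))
    rw [hpowinv x hx, smul_eq_mul]
    ring
  · have hsub := integral_comp_rpow_Ioi_of_pos
      (g := fun u : ℝ => 1 / (1 + u ^ (1/δ))) hδ0
    have hrw : Set.EqOn (fun x : ℝ => (δ * x ^ (δ - 1)) • (1 / (1 + (x ^ δ) ^ (1/δ))))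
        (fun x : ℝ => δ * (x ^ (δ - 1) / (1 + x))) (Ioi 0) := by
      intro x hx
      show (δ * x ^ (δ - 1)) • (1 / (1 + (x ^ δ) ^ (1/δ))) = δ * (x ^ (δ - 1) / (1 + x))
      rw [hpowinv x hx, smul_eq_mul]
      ring
    rw [← hsub, setIntegral_congr_fun measurableSet_Ioi hrw, integral_const_mul, hval, kappa,
      add_comm 1 δ, Real.Gamma_add_one hδ0.ne']
    ring

lemma main_tonelli {δ : ℝ} (hδ0 : 0 < δ) (hδ1 : δ < 1) :
    ∫⁻ v in Ioi (0:ℝ), Il δ v = ENNReal.ofReal (π/2 * kappa δ) := by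
  obtain ⟨hint1, hval1⟩ := oneAdd_int hδ0 hδ1
  have h1 : ∫⁻ v in Ioi (0:ℝ), Il δ v = ∫⁻ v in Ioi (0:ℝ), ∫⁻ u, q δ v u :=
    lintegral_congr fun v => Il_eq δ v
  rw [h1, lintegral_lintegral_swap (meas_q δ).aemeasurable]
  have key : ∀ u : ℝ, (∫⁻ v in Ioi (0:ℝ), q δ v u)
      = Set.indicator (Ioi (0:ℝ))
          (fun u => ENNReal.ofReal (π/2 * (1/(1 + u ^ (1/δ))))) u := by
    intro u
    by_cases hu : 0 < u
    · have hu1δ : 0 < 1 + u ^ (1/δ) := by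
        have := Real.rpow_pos_of_pos hu (1/δ); linarith
      have ha : ∀ v ∈ Ioi (0:ℝ), q δ v u
          = Set.indicator (Ioo 0 (Real.sqrt u))
              (fun v => ENNReal.ofReal (1/((1 + u ^ (1/δ)) * Real.sqrt (u - v^2)))) v := by
        intro v hv
        have hv0 : (0:ℝ) < v := hv
        by_cases hvu : v ^ 2 < u
        · have hv' : v < Real.sqrt u := (Real.lt_sqrt hv0.le).mpr hvu
          rw [q, Set.indicator_of_mem (Set.mem_Ioi.mpr hvu),
            Set.indicator_of_mem (Set.mem_Ioo.mpr ⟨hv0, hv'⟩)]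
        · have hv' : ¬ v < Real.sqrt u := fun h => hvu ((Real.lt_sqrt hv0.le).mp h)
          rw [q, Set.indicator_of_notMem (by simpa using hvu),
            Set.indicator_of_notMem (by simp [Set.mem_Ioo, hv'])]
      rw [setLIntegral_congr_fun measurableSet_Ioi ha]
      have hsub : Ioo (0:ℝ) (Real.sqrt u) ⊆ Ioi 0 := fun x hx => hx.1
      rw [← lintegral_indicator measurableSet_Ioi, Set.indicator_indicator,
        Set.inter_eq_self_of_subset_right hsub, lintegral_indicator measurableSet_Ioo]
      have hsplit : ∀ v : ℝ, ENNReal.ofReal (1/((1 + u ^ (1/δ)) * Real.sqrt (u - v^2)))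
          = ENNReal.ofReal (1/(1 + u ^ (1/δ))) * ENNReal.ofReal (1/Real.sqrt (u - v^2)) := by
        intro v
        rw [← ENNReal.ofReal_mul (by positivity)]
        congr 1
        rw [one_div, mul_inv, one_div, one_div]; ring
      simp only [hsplit]
      have hmv : Measurable fun v : ℝ => ENNReal.ofReal (1 / Real.sqrt (u - v ^ 2)) := by
        apply Measurable.ennreal_ofReal
        exact measurable_const.div ((measurable_const.sub (measurable_id.pow_const 2)).sqrt)
      rw [lintegral_const_mul _ hmv]
      rw [← ofReal_integral_eq_lintegral_ofReal (integrableOn_sqrtker hu) ?_, integral_sqrtker hu]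
      · rw [Set.indicator_of_mem (Set.mem_Ioi.mpr hu),
          ← ENNReal.ofReal_mul (by positivity)]
        congr 1
        ring
      · filter_upwards [ae_restrict_mem measurableSet_Ioo] with v hv
        positivity
    · have ha : ∀ v ∈ Ioi (0:ℝ), q δ v u = 0 := by
        intro v hv
        have hv0 : (0:ℝ) < v := hv
        have hlt : ¬ v ^ 2 < u := by push_neg at hu ⊢; nlinarith
        rw [q, Set.indicator_of_notMem (by simpa using hlt)]
      rw [setLIntegral_congr_fun measurableSet_Ioi ha, lintegral_zero,
        Set.indicator_of_notMem (by simpa using hu)]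
  rw [lintegral_congr key, lintegral_indicator measurableSet_Ioi]
  rw [← ofReal_integral_eq_lintegral_ofReal (hint1.const_mul (π/2)) ?_]
  · rw [integral_const_mul, hval1]
  · filter_upwards [ae_restrict_mem measurableSet_Ioi] with u hu
    have hu0 : (0:ℝ) < u := hu
    have := Real.rpow_pos_of_pos hu0 (1/δ)
    positivity

lemma Ib_eq_G (δ : ℝ) (v : ℝ) : Ib δ v = G δ v := by
  have hnn : 0 ≤ᵐ[volume.restrict (Ioi (v^2))]
      fun u : ℝ => 1 / ((1 + u ^ (1/δ)) * Real.sqrt (u - v^2)) := by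
    filter_upwards [ae_restrict_mem measurableSet_Ioi] with u hu
    have hu0 : 0 < u := lt_of_le_of_lt (sq_nonneg v) hu
    have := Real.rpow_pos_of_pos hu0 (1/δ)
    positivity
  have hm : AEStronglyMeasurable (fun u : ℝ => 1 / ((1 + u ^ (1/δ)) * Real.sqrt (u - v^2)))
      (volume.restrict (Ioi (v^2))) := by
    apply Measurable.aestronglyMeasurable
    exact measurable_const.div ((measurable_const.add
      (measurable_id.pow measurable_const)).mul ((measurable_id.sub measurable_const).sqrt))
  rw [Ib, integral_eq_lintegral_of_nonneg_ae hnn hm]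
  rfl

lemma G_nonneg (δ v : ℝ) : 0 ≤ G δ v := ENNReal.toReal_nonneg

lemma kappa_pos {δ : ℝ} (hδ0 : 0 < δ) (hδ1 : δ < 1) : 0 < kappa δ :=
  mul_pos (Real.Gamma_pos_of_pos (by linarith)) (Real.Gamma_pos_of_pos (by linarith))

lemma G_int {δ : ℝ} (hδ0 : 0 < δ) (hδ1 : δ < 1) :
    IntegrableOn (G δ) (Ioi 0) ∧ ∫ v in Ioi 0, G δ v = π/2 * kappa δ := by
  have hfin : ∀ᵐ v ∂(volume.restrict (Ioi (0:ℝ))), Il δ v < ⊤ := by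
    apply ae_lt_top (meas_Il δ)
    rw [main_tonelli hδ0 hδ1]; exact ENNReal.ofReal_ne_top
  have hG : ∫⁻ v in Ioi (0:ℝ), ENNReal.ofReal (G δ v) = ENNReal.ofReal (π/2 * kappa δ) := by
    rw [← main_tonelli hδ0 hδ1]
    apply lintegral_congr_ae
    filter_upwards [hfin] with v hv
    exact ENNReal.ofReal_toReal hv.ne
  have hint : IntegrableOn (G δ) (Ioi 0) := by
    refine ⟨((meas_Il δ).ennreal_toReal).aestronglyMeasurable, ?_⟩
    rw [hasFiniteIntegral_iff_ofReal (ae_of_all _ fun v => G_nonneg δ v), hG]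
    exact ENNReal.ofReal_lt_top
  refine ⟨hint, ?_⟩
  rw [integral_eq_lintegral_of_nonneg_ae (ae_of_all _ fun v => G_nonneg δ v)
    hint.1, hG, ENNReal.toReal_ofReal]
  have hκ := kappa_pos hδ0 hδ1
  have := Real.pi_pos
  positivity

lemma Phi_tendsto {δ : ℝ} (hδ0 : 0 < δ) (hδ1 : δ < 1) :
    Tendsto (fun ε : ℝ => (∫ v in Ioi 0, (1 - Real.exp (-(ε * Ib δ v)))) / ε)
      (𝓝[>] (0:ℝ)) (𝓝 (π/2 * kappa δ)) := by
  obtain ⟨hGint, hGval⟩ := G_int hδ0 hδ1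
  have hIbG : ∀ v, Ib δ v = G δ v := Ib_eq_G δ
  have hGmeas : Measurable (G δ) := (meas_Il δ).ennreal_toReal
  have hmain : Tendsto (fun ε : ℝ => ∫ v in Ioi 0, (1 - Real.exp (-(ε * Ib δ v))) / ε)
      (𝓝[>] (0:ℝ)) (𝓝 (∫ v in Ioi 0, G δ v)) := by
    apply tendsto_integral_filter_of_dominated_convergence (bound := G δ)
    · apply Eventually.of_forall
      intro ε
      apply Measurable.aestronglyMeasurable
      simp only [hIbG]
      exact ((((hGmeas.const_mul ε).neg).exp).const_sub 1).div_const ε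
    · filter_upwards [self_mem_nhdsWithin] with ε (hε : 0 < ε)
      apply ae_of_all
      intro v
      have ha : 0 ≤ G δ v := G_nonneg δ v
      have hexp : Real.exp (-(ε * G δ v)) ≤ 1 := by
        rw [← Real.exp_zero]
        apply Real.exp_le_exp.mpr
        nlinarith
      have hle : 1 - Real.exp (-(ε * G δ v)) ≤ ε * G δ v := by
        have := Real.add_one_le_exp (-(ε * G δ v))
        linarith
      rw [hIbG v, Real.norm_eq_abs, abs_of_nonneg (div_nonneg (by linarith) hε.le)]
      rw [div_le_iff₀ hε]
      nlinarith
    · exact hGint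
    · apply ae_of_all
      intro v
      simp only [hIbG]
      set a := G δ v with hadef
      have hd : HasDerivAt (fun ε : ℝ => 1 - Real.exp (-(ε * a))) a 0 := by
        have h1 : HasDerivAt (fun ε : ℝ => ε * a) a 0 := hasDerivAt_mul_const a
        have h4 := ((h1.neg).exp).const_sub 1
        simpa using h4
      rw [hasDerivAt_iff_tendsto_slope] at hd
      have h5 : Tendsto (slope (fun ε : ℝ => 1 - Real.exp (-(ε * a))) 0)
          (𝓝[>] (0:ℝ)) (𝓝 a) :=
        hd.mono_left (nhdsWithin_mono _ fun x hx => ne_of_gt hx)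
      apply h5.congr
      intro ε
      rw [slope_def_field]
      simp
  have heq : (fun ε : ℝ => ∫ v in Ioi 0, (1 - Real.exp (-(ε * Ib δ v))) / ε)
      = fun ε : ℝ => (∫ v in Ioi 0, (1 - Real.exp (-(ε * Ib δ v)))) / ε := by
    funext ε; exact integral_div ε _
  rw [heq, hGval] at hmain
  exact hmain

end Stmt10

theorem stmt10 (α D lam mu p : ℝ) (hα : 2 < α) (hD : 0 < D) (hlam : 0 < lam)
    (hmu : 0 < mu) (hp0 : 0 < p) (hp1 : p ≤ 1) (δ : ℝ) (hδ : δ = 2 / α) :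
    Tendsto (fun θ : ℝ =>
        (2 * mu * ∫ t in Set.Ioi (0 : ℝ), (1 - Lfun lam p δ t (θ * D ^ α))) /
          (π * lam * p * mu * D ^ 2 * kappa δ * θ ^ δ))
      (nhdsWithin 0 (Set.Ioi 0)) (nhds 1) := by
  have hα0 : (0:ℝ) < α := by linarith
  have hδ0 : 0 < δ := by rw [hδ]; positivity
  have hδ1 : δ < 1 := by rw [hδ, div_lt_one hα0]; linarith
  have hκ : 0 < kappa δ := Stmt10.kappa_pos hδ0 hδ1
  have hπ := Real.pi_pos
  have hC : 0 < π/2 * kappa δ := by positivity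
  have hδ2 : δ/2 + δ/2 = δ := by ring
  set e : ℝ → ℝ := fun θ => lam * p * (θ ^ (δ/2) * D) with he
  have hemap : Tendsto e (𝓝[>] (0:ℝ)) (𝓝[>] (0:ℝ)) := by
    rw [tendsto_nhdsWithin_iff]
    constructor
    · have h1 : Tendsto (fun θ : ℝ => θ ^ (δ/2)) (𝓝 0) (𝓝 0) := by
        have h := (Real.continuousAt_rpow_const 0 (δ/2) (Or.inr (by positivity))).tendsto
        simpa [Real.zero_rpow (by positivity : δ/2 ≠ 0)] using h
      have h2 : Tendsto (fun θ : ℝ => lam * p * (θ ^ (δ/2) * D)) (𝓝[>] (0:ℝ))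
          (𝓝 (lam * p * (0 * D))) :=
        ((h1.mono_left nhdsWithin_le_nhds).mul_const D).const_mul (lam * p)
      simpa using h2
    · filter_upwards [self_mem_nhdsWithin] with θ (hθ : 0 < θ)
      have h3 : 0 < θ ^ (δ/2) := Real.rpow_pos_of_pos hθ _
      exact mul_pos (mul_pos hlam hp0) (mul_pos h3 hD)
  have hphi := (Stmt10.Phi_tendsto hδ0 hδ1).comp hemap
  have hdiv := hphi.div_const (π/2 * kappa δ)
  rw [div_self hC.ne'] at hdiv
  apply hdiv.congr'
  filter_upwards [self_mem_nhdsWithin] with θ (hθ : 0 < θ)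
  -- per-θ computation
  have hDα : (0:ℝ) < D ^ α := Real.rpow_pos_of_pos hD α
  have hs : (0:ℝ) < θ * D ^ α := mul_pos hθ hDα
  set s : ℝ := θ * D ^ α with hsdef
  set c : ℝ := θ ^ (δ/2) * D with hcdef
  have hθδ2 : 0 < θ ^ (δ/2) := Real.rpow_pos_of_pos hθ _
  have hc0 : 0 < c := mul_pos hθδ2 hD
  have hαδ : α * (δ/2) = 1 := by rw [hδ]; field_simp
  have hc' : s ^ (δ/2) = c := by
    rw [hsdef, Real.mul_rpow hθ.le hDα.le, ← Real.rpow_mul hD.le, hαδ, Real.rpow_one]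
  have hc2 : c * c = D ^ 2 * θ ^ δ := by
    rw [hcdef, show θ ^ (δ/2) * D * (θ ^ (δ/2) * D) = (θ ^ (δ/2) * θ ^ (δ/2)) * (D * D) by ring,
      ← Real.rpow_add hθ, hδ2, ← pow_two]
    ring
  have hsq : ∀ v : ℝ, (c * v) ^ 2 * s ^ (-δ) = v ^ 2 := by
    intro v
    have hcc : c ^ 2 * s ^ (-δ) = 1 := by
      rw [← hc', ← Real.rpow_natCast (s ^ (δ/2)) 2, ← Real.rpow_mul hs.le,
        show (δ/2) * (2:ℕ) = δ by push_cast; ring, ← Real.rpow_add hs]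
      simp
    calc (c * v) ^ 2 * s ^ (-δ) = (c ^ 2 * s ^ (-δ)) * v ^ 2 := by ring
    _ = v ^ 2 := by rw [hcc]; ring
  have hfun : (fun v : ℝ => 1 - Lfun lam p δ (c * v) s)
      = fun v : ℝ => 1 - Real.exp (-(e θ * Stmt10.Ib δ v)) := by
    funext v
    rw [Lfun, Stmt10.Ib, hsq v, he]
    rw [hc']
  have hcomp := integral_comp_mul_left_Ioi (fun t => 1 - Lfun lam p δ t s) 0 hc0
  simp only [mul_zero] at hcomp
  rw [hfun] at hcomp
  have hT : (∫ t in Set.Ioi (0:ℝ), (1 - Lfun lam p δ t s))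
      = c * ∫ v in Set.Ioi (0:ℝ), (1 - Real.exp (-(e θ * Stmt10.Ib δ v))) := by
    rw [hcomp, smul_eq_mul, ← mul_assoc, mul_inv_cancel₀ hc0.ne', one_mul]
  set Φ : ℝ := ∫ v in Set.Ioi (0:ℝ), (1 - Real.exp (-(e θ * Stmt10.Ib δ v))) with hΦ
  have heθ : e θ = lam * p * c := rfl
  have heθ0 : 0 < e θ := by rw [heθ]; positivity
  have hθδ : 0 < θ ^ δ := Real.rpow_pos_of_pos hθ _
  show Φ / e θ / (π/2 * kappa δ)
      = 2 * mu * (∫ t in Set.Ioi (0:ℝ), (1 - Lfun lam p δ t s))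
          / (π * lam * p * mu * D ^ 2 * kappa δ * θ ^ δ)
  have hpow : θ ^ (δ/2) * θ ^ (δ/2) = θ ^ δ := by
    rw [← Real.rpow_add hθ, hδ2]
  rw [hT, heθ, div_div, div_eq_div_iff (by positivity) (by positivity)]
  linear_combination (-(π * lam * p * mu * kappa δ * Φ * D ^ 2)) * hpow
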